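/- Let T be a rooted (not necessarily binary) phylogenetic tree on a finite taxon set X of size N, equipped with the rooted triple metrization, and let d_RT denote the induced tree metric on X. Then for all distinct x, y ∈ X, d_RT(x,y) = 2·|R̃_{x,y}| + 2, where R̃_{x,y} is the set of rooted triples displayed on T of the form xz|y or yz|x together with the degenerate rooted triples xyz displayed on T. -/
import Mathlib


open Function

/-- A rooted phylogenetic tree on taxon set `X`, with vertex set `V`: there is a root,
every vertex reaches the root by iterating the parent map, the leaves (vertices with no
children) are bijectively labeled by the taxa, and every internal vertex has at least
two children (so the root has degree ≥ 2 and other internal vertices degree ≥ 3). -/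
structure RPhylo (X V : Type*) where
  root : V
  parent : V → V
  leaf : X → V
  parent_root : parent root = root
  reach : ∀ v : V, ∃ n : ℕ, parent^[n] v = root
  leaf_inj : Function.Injective leaf
  leaf_no_child : ∀ (x : X) (w : V), parent w = leaf x → w = leaf x
  leaf_surj : ∀ v : V, (∀ w : V, parent w = v → w = v) → ∃ x : X, leaf x = v
  internal_two : ∀ v : V, ({w | parent w = v ∧ w ≠ v} : Set V) = ∅ ∨
      2 ≤ ({w | parent w = v ∧ w ≠ v} : Set V).ncard

namespace RPhylo

variable {X V : Type*}

/-- The children of a vertex. -/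
def children (T : RPhylo X V) (v : V) : Set V := {w | T.parent w = v ∧ w ≠ v}

/-- A rooted phylogenetic tree is binary if every non-leaf vertex has exactly two
children (root of degree 2, other internal vertices of degree 3). -/
def IsBinary (T : RPhylo X V) : Prop :=
  ∀ v : V, T.children v = ∅ ∨ (T.children v).ncard = 2

/-- `u` is a (weak) ancestor of `v`. -/
def Anc (T : RPhylo X V) (u v : V) : Prop := ∃ n : ℕ, T.parent^[n] v = u

/-- The set of taxa labelling leaf descendants of `v` (a leaf is its own descendant). -/
def clade (T : RPhylo X V) (v : V) : Set X := {x | T.Anc v (T.leaf x)}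

/-- `m` is the most recent common ancestor of the set `S` of vertices. -/
def IsMRCA (T : RPhylo X V) (S : Set V) (m : V) : Prop :=
  (∀ v ∈ S, T.Anc m v) ∧ ∀ a : V, (∀ v ∈ S, T.Anc a v) → T.Anc a m

/-- Weight, under the rooted triple metrization, of the edge from `v` to its parent:
the drop in the number of leaf descendants from parent to child. -/
noncomputable def wRT (T : RPhylo X V) (v : V) : ℕ :=
  (T.clade (T.parent v)).ncard - (T.clade v).ncard

/-- Sum of the weights (under the weighting `w`, where `w v` is the weight of the
edge from `v` to its parent) of the first `n` edges on the path from `v` toward the root. -/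
def upSum (T : RPhylo X V) (w : V → ℕ) : V → ℕ → ℕ
  | _, 0 => 0
  | v, n + 1 => w v + T.upSum w (T.parent v) n

/-- `T` displays the rooted triple `ab|c`: the MRCA of `a,b` is a proper descendant of
the MRCA of `a,b,c`. -/
def DisplaysTriple (T : RPhylo X V) (a b c : X) : Prop :=
  ∃ m₁ m₂ : V, T.IsMRCA {T.leaf a, T.leaf b} m₁ ∧
    T.IsMRCA {T.leaf a, T.leaf b, T.leaf c} m₂ ∧ m₁ ≠ m₂ ∧ T.Anc m₂ m₁

/-- `T` displays the degenerate (star) rooted triple `abc`: the induced tree on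
`{a,b,c}` is unresolved, i.e. all three pairwise MRCAs coincide. -/
def DisplaysStarTriple (T : RPhylo X V) (a b c : X) : Prop :=
  ∃ m : V, T.IsMRCA {T.leaf a, T.leaf b} m ∧ T.IsMRCA {T.leaf a, T.leaf c} m ∧
    T.IsMRCA {T.leaf b, T.leaf c} m

end RPhylo

namespace RPhylo

variable {X V : Type*} (T : RPhylo X V)

lemma anc_refl (v : V) : T.Anc v v := ⟨0, rfl⟩

lemma anc_trans {u v w : V} (h1 : T.Anc u v) (h2 : T.Anc w u) : T.Anc w v := by
  obtain ⟨n, hn⟩ := h1; obtain ⟨k, hk⟩ := h2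
  exact ⟨k + n, by rw [Function.iterate_add_apply, hn, hk]⟩

lemma iterate_root (n : ℕ) : T.parent^[n] T.root = T.root := by
  induction n with
  | zero => rfl
  | succ n ih => rw [Function.iterate_succ_apply', ih, T.parent_root]

lemma anc_root (v : V) : T.Anc T.root v := T.reach v

lemma cycle_iterate {v : V} {p : ℕ} (hp : T.parent^[p] v = v) (k : ℕ) :
    T.parent^[k * p] v = v := by
  induction k with
  | zero => simp
  | succ k ih => rw [Nat.succ_mul, Function.iterate_add_apply, hp, ih]

lemma anc_antisymm {u v : V} (h1 : T.Anc u v) (h2 : T.Anc v u) : u = v := by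
  obtain ⟨n, hn⟩ := h1; obtain ⟨k, hk⟩ := h2
  rcases Nat.eq_zero_or_pos (k + n) with h0 | hpos
  · have hn0 : n = 0 := by omega
    rw [hn0] at hn; exact hn.symm
  · have hcyc : T.parent^[k + n] v = v := by
      rw [Function.iterate_add_apply, hn, hk]
    obtain ⟨N, hN⟩ := T.reach v
    have h1' : T.parent^[N * (k + n)] v = v := T.cycle_iterate hcyc N
    have h2' : T.parent^[N * (k + n)] v = T.root := by
      have hge : N ≤ N * (k + n) := Nat.le_mul_of_pos_right N hpos
      obtain ⟨j, hj⟩ := Nat.exists_eq_add_of_le hge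
      rw [hj, Nat.add_comm, Function.iterate_add_apply, hN, T.iterate_root]
    have hv : v = T.root := by rw [← h1', h2']
    have hu : u = T.root := by rw [← hn, hv, T.iterate_root]
    rw [hu, hv]

lemma anc_total {a b v : V} (ha : T.Anc a v) (hb : T.Anc b v) :
    T.Anc a b ∨ T.Anc b a := by
  obtain ⟨n, hn⟩ := ha; obtain ⟨k, hk⟩ := hb
  rcases le_total n k with h | h
  · right
    exact ⟨k - n, by rw [← hn, ← Function.iterate_add_apply, Nat.sub_add_cancel h]; exact hk⟩
  · left
    exact ⟨n - k, by rw [← hk, ← Function.iterate_add_apply, Nat.sub_add_cancel h]; exact hn⟩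

lemma exists_isMRCA (S : Set V) (v0 : V) (hv0 : v0 ∈ S) : ∃ m, T.IsMRCA S m := by
  classical
  have hex : ∃ n, ∀ v ∈ S, T.Anc (T.parent^[n] v0) v := by
    obtain ⟨N, hN⟩ := T.reach v0
    exact ⟨N, fun v _ => hN ▸ T.anc_root v⟩
  refine ⟨T.parent^[Nat.find hex] v0, Nat.find_spec hex, ?_⟩
  intro a ha
  obtain ⟨i, hi⟩ := ha v0 hv0
  have hle : Nat.find hex ≤ i :=
    Nat.find_min' hex (fun v hv => hi ▸ ha v hv)
  exact ⟨i - Nat.find hex, by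
    rw [← Function.iterate_add_apply, Nat.sub_add_cancel hle]; exact hi⟩

lemma isMRCA_unique {S : Set V} {m1 m2 : V} (h1 : T.IsMRCA S m1) (h2 : T.IsMRCA S m2) :
    m1 = m2 :=
  T.anc_antisymm (h2.2 m1 h1.1) (h1.2 m2 h2.1)

lemma clade_mono {u v : V} (h : T.Anc u v) : T.clade v ⊆ T.clade u :=
  fun _ hz => T.anc_trans hz h

lemma clade_subset_parent (v : V) : T.clade v ⊆ T.clade (T.parent v) :=
  T.clade_mono ⟨1, rfl⟩

lemma clade_subset_iterate (v : V) (n : ℕ) : T.clade v ⊆ T.clade (T.parent^[n] v) :=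
  T.clade_mono ⟨n, rfl⟩

lemma iterate_eq_leaf {x : X} : ∀ (n : ℕ) (w : V), T.parent^[n] w = T.leaf x → w = T.leaf x := by
  intro n
  induction n with
  | zero => intro w h; exact h
  | succ n ih =>
    intro w h
    rw [Function.iterate_succ_apply'] at h
    exact ih w (T.leaf_no_child x _ h)

lemma clade_leaf (x : X) : T.clade (T.leaf x) = {x} := by
  ext z
  simp only [clade, Anc, Set.mem_setOf_eq, Set.mem_singleton_iff]
  constructor
  · rintro ⟨n, hn⟩
    exact T.leaf_inj (T.iterate_eq_leaf n _ hn)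
  · rintro rfl
    exact ⟨0, rfl⟩

lemma upSum_wRT [Finite X] (n : ℕ) (v : V) :
    T.upSum T.wRT v n = (T.clade (T.parent^[n] v)).ncard - (T.clade v).ncard := by
  induction n generalizing v with
  | zero => simp [upSum]
  | succ n ih =>
    have h1 : (T.clade v).ncard ≤ (T.clade (T.parent v)).ncard :=
      Set.ncard_le_ncard (T.clade_subset_parent v) (Set.toFinite _)
    have h2 : (T.clade (T.parent v)).ncard
        ≤ (T.clade (T.parent^[n] (T.parent v))).ncard :=
      Set.ncard_le_ncard (T.clade_subset_iterate _ n) (Set.toFinite _)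
    rw [upSum, ih (T.parent v), wRT, Function.iterate_succ_apply]
    omega

lemma displays_anc {x z y : X} {m : V} (hm : T.IsMRCA {T.leaf x, T.leaf y} m)
    (h : T.DisplaysTriple x z y) : T.Anc m (T.leaf z) := by
  obtain ⟨m1, m2, h1, h2, hne, h21⟩ := h
  have hm1x : T.Anc m1 (T.leaf x) := h1.1 _ (by simp)
  have hm1z : T.Anc m1 (T.leaf z) := h1.1 _ (by simp)
  have hmx : T.Anc m (T.leaf x) := hm.1 _ (by simp)
  have hmy : T.Anc m (T.leaf y) := hm.1 _ (by simp)
  rcases T.anc_total hmx hm1x with h | h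
  · exact T.anc_trans hm1z h
  · exfalso
    apply hne
    refine T.anc_antisymm ?_ h21
    apply h2.2
    intro v hv
    simp only [Set.mem_insert_iff, Set.mem_singleton_iff] at hv
    rcases hv with rfl | rfl | rfl
    · exact hm1x
    · exact hm1z
    · exact T.anc_trans hmy h

lemma clade_displays {x y z : X} {m : V} (hm : T.IsMRCA {T.leaf x, T.leaf y} m)
    (hz : T.Anc m (T.leaf z)) :
    T.DisplaysTriple x z y ∨ T.DisplaysTriple y z x ∨ T.DisplaysStarTriple x y z := by
  obtain ⟨mxz, hmxz⟩ := T.exists_isMRCA {T.leaf x, T.leaf z} (T.leaf x) (by simp)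
  obtain ⟨myz, hmyz⟩ := T.exists_isMRCA {T.leaf y, T.leaf z} (T.leaf y) (by simp)
  have hmx : T.Anc m (T.leaf x) := hm.1 _ (by simp)
  have hmy : T.Anc m (T.leaf y) := hm.1 _ (by simp)
  have hmxyz : T.IsMRCA {T.leaf x, T.leaf z, T.leaf y} m := by
    constructor
    · intro v hv
      simp only [Set.mem_insert_iff, Set.mem_singleton_iff] at hv
      rcases hv with rfl | rfl | rfl
      exacts [hmx, hz, hmy]
    · intro a ha
      apply hm.2
      intro v hv
      simp only [Set.mem_insert_iff, Set.mem_singleton_iff] at hv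
      rcases hv with rfl | rfl
      · exact ha _ (by simp)
      · exact ha _ (by simp)
  have hmyzx : T.IsMRCA {T.leaf y, T.leaf z, T.leaf x} m := by
    constructor
    · intro v hv
      simp only [Set.mem_insert_iff, Set.mem_singleton_iff] at hv
      rcases hv with rfl | rfl | rfl
      exacts [hmy, hz, hmx]
    · intro a ha
      apply hm.2
      intro v hv
      simp only [Set.mem_insert_iff, Set.mem_singleton_iff] at hv
      rcases hv with rfl | rfl
      · exact ha _ (by simp)
      · exact ha _ (by simp)
  have hAncmxz : T.Anc m mxz := by
    apply hmxz.2
    intro v hv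
    simp only [Set.mem_insert_iff, Set.mem_singleton_iff] at hv
    rcases hv with rfl | rfl
    exacts [hmx, hz]
  have hAncmyz : T.Anc m myz := by
    apply hmyz.2
    intro v hv
    simp only [Set.mem_insert_iff, Set.mem_singleton_iff] at hv
    rcases hv with rfl | rfl
    exacts [hmy, hz]
  by_cases hx : mxz = m
  · by_cases hy : myz = m
    · right; right
      exact ⟨m, hm, hx ▸ hmxz, hy ▸ hmyz⟩
    · right; left
      exact ⟨myz, m, hmyz, hmyzx, hy, hAncmyz⟩
  · left
    exact ⟨mxz, m, hmxz, hmxyz, hx, hAncmxz⟩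

end RPhylo

/-- **Theorem (rooted triple metrization, non-binary case).** For a rooted (not
necessarily binary) phylogenetic tree `T` on `X`, equipped with the rooted triple
metrization, and distinct taxa `x ≠ y`, the tree-metric distance `d_RT(x,y)` equals
`2·|R̃_{x,y}| + 2`, where `R̃_{x,y}` is the set of rooted triples displayed on `T` of
the form `xz|y` or `yz|x`, together with the degenerate rooted triples `xyz`. -/
theorem rooted_triple_metrization_distance_nonbinary
    {X V : Type*} [Fintype X] [Fintype V]
    (T : RPhylo X V)
    (x y : X) (hxy : x ≠ y)
    (m : V) (hm : T.IsMRCA {T.leaf x, T.leaf y} m)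
    (kx ky : ℕ)
    (hkx : T.parent^[kx] (T.leaf x) = m) (hkx' : ∀ i < kx, T.parent^[i] (T.leaf x) ≠ m)
    (hky : T.parent^[ky] (T.leaf y) = m) (hky' : ∀ i < ky, T.parent^[i] (T.leaf y) ≠ m) :
    T.upSum T.wRT (T.leaf x) kx + T.upSum T.wRT (T.leaf y) ky
      = 2 * ({z : X | z ≠ x ∧ z ≠ y ∧
          (T.DisplaysTriple x z y ∨ T.DisplaysTriple y z x ∨
            T.DisplaysStarTriple x y z)} : Set X).ncard + 2 := by
  classical
  have hmx : T.Anc m (T.leaf x) := hm.1 _ (by simp)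
  have hmy : T.Anc m (T.leaf y) := hm.1 _ (by simp)
  have hm' : T.IsMRCA {T.leaf y, T.leaf x} m := by
    rwa [Set.pair_comm]
  -- the telescoping of the two up-sums
  have hx1 : T.upSum T.wRT (T.leaf x) kx = (T.clade m).ncard - 1 := by
    rw [T.upSum_wRT, hkx, T.clade_leaf, Set.ncard_singleton]
  have hy1 : T.upSum T.wRT (T.leaf y) ky = (T.clade m).ncard - 1 := by
    rw [T.upSum_wRT, hky, T.clade_leaf, Set.ncard_singleton]
  -- the triple set is the clade of m minus {x, y}
  have hset : ({z : X | z ≠ x ∧ z ≠ y ∧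
      (T.DisplaysTriple x z y ∨ T.DisplaysTriple y z x ∨
        T.DisplaysStarTriple x y z)} : Set X) = T.clade m \ {x, y} := by
    ext z
    simp only [Set.mem_setOf_eq, Set.mem_diff, Set.mem_insert_iff,
      Set.mem_singleton_iff, not_or]
    constructor
    · rintro ⟨hzx, hzy, hd⟩
      refine ⟨?_, hzx, hzy⟩
      rcases hd with h | h | h
      · exact T.displays_anc hm h
      · exact T.displays_anc hm' h
      · obtain ⟨m0, h1, h2, _⟩ := h
        have : m0 = m := T.isMRCA_unique h1 hm
        subst this
        exact h2.1 _ (by simp)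
    · rintro ⟨hz, hzx, hzy⟩
      exact ⟨hzx, hzy, T.clade_displays hm hz⟩
  have hpair : ({x, y} : Set X) ⊆ T.clade m := by
    intro z hz
    simp only [Set.mem_insert_iff, Set.mem_singleton_iff] at hz
    rcases hz with rfl | rfl
    exacts [hmx, hmy]
  have hc2 : 2 ≤ (T.clade m).ncard := by
    calc 2 = ({x, y} : Set X).ncard := (Set.ncard_pair hxy).symm
      _ ≤ (T.clade m).ncard := Set.ncard_le_ncard hpair (Set.toFinite _)
  rw [hx1, hy1, hset, Set.ncard_diff hpair (Set.toFinite _), Set.ncard_pair hxy]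
  omega
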